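/- Da Costa's relativized reductio axiom (11), B^{(n)} ⇒ ((A ⇒ B) ⇒ ((A ⇒ ¬B) ⇒ ¬A)), is derivable already from IPC⁺ together with the contraposition axiom (9b); hence it is redundant in mZ_n. -/
import Mathlib


inductive Fm where
  | var : Nat → Fm
  | bot : Fm
  | top : Fm
  | neg : Fm → Fm
  | and : Fm → Fm → Fm
  | or  : Fm → Fm → Fm
  | imp : Fm → Fm → Fm
deriving DecidableEq

open Fm

/-- Axioms (1)-(8) of positive intuitionistic propositional calculus IPC⁺. -/
def PosAx (f : Fm) : Prop := ∃ A B C,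
  f = imp A (imp B A) ∨
  f = imp (imp A B) (imp (imp A (imp B C)) (imp A C)) ∨
  f = imp A (imp B (Fm.and A B)) ∨
  f = imp (Fm.and A B) A ∨
  f = imp (Fm.and A B) B ∨
  f = imp A (Fm.or A B) ∨
  f = imp B (Fm.or A B) ∨
  f = imp (imp A C) (imp (imp B C) (imp (Fm.or A B) C))

/-- Axiom (9b): contraposition. -/
def Ax9b (f : Fm) : Prop := ∃ A B, f = imp (imp A B) (imp (neg B) (neg A))

/-- Axiom (10b)': 1 ⇒ ¬0. -/
def Ax10b' (f : Fm) : Prop := f = imp Fm.top (neg Fm.bot)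

/-- Axiom (11b): A ⇒ 1 and 0 ⇒ A. -/
def Ax11b (f : Fm) : Prop := ∃ A, f = imp A Fm.top ∨ f = imp Fm.bot A

/-- Axiom (12b): (¬A ∧ ¬B) ⇒ ¬(A ∨ B). -/
def Ax12b (f : Fm) : Prop := ∃ A B, f = imp (Fm.and (neg A) (neg B)) (neg (Fm.or A B))

/-- Axiom (13b): ¬(A ∧ B) ⇒ (¬A ∨ ¬B). -/
def Ax13b (f : Fm) : Prop := ∃ A B, f = imp (neg (Fm.and A B)) (Fm.or (neg A) (neg B))

/-- Axioms of the system mZ_n. -/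
def MZAx (f : Fm) : Prop := PosAx f ∨ Ax9b f ∨ Ax10b' f ∨ Ax11b f ∨ Ax12b f

/-- Axioms of the system mCZ_n. -/
def MCZAx (f : Fm) : Prop := MZAx f ∨ Ax13b f

/-- Hilbert-style derivability from hypotheses H with axiom set Ax; Modus Ponens only rule. -/
inductive Deriv (Ax : Fm → Prop) (H : Set Fm) : Fm → Prop
  | ax  {f : Fm} : Ax f → Deriv Ax H f
  | hyp {f : Fm} : f ∈ H → Deriv Ax H f
  | mp  {A B : Fm} : Deriv Ax H (imp A B) → Deriv Ax H A → Deriv Ax H B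

/-- A° = ¬(A ∧ ¬A). -/
def circ (A : Fm) : Fm := neg (Fm.and A (neg A))

/-- Aⁿ : n-fold application of °, A⁰ = A. -/
def pow (A : Fm) : Nat → Fm
  | 0 => A
  | n + 1 => circ (pow A n)

/-- A^{(n)} = A¹ ∧ A² ∧ … ∧ Aⁿ (for n ≥ 1; conventionally ⊤ for n = 0). -/
def conN (A : Fm) : Nat → Fm
  | 0 => Fm.top
  | 1 => pow A 1
  | n + 2 => Fm.and (conN A (n + 1)) (pow A (n + 2))


section Aux

def Ax' : Fm → Prop := fun f => PosAx f ∨ Ax9b f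

lemma d_ax1 {H : Set Fm} (A B : Fm) : Deriv Ax' H (imp A (imp B A)) :=
  .ax (Or.inl ⟨A, B, B, Or.inl rfl⟩)

lemma d_ax2 {H : Set Fm} (A B C : Fm) :
    Deriv Ax' H (imp (imp A B) (imp (imp A (imp B C)) (imp A C))) :=
  .ax (Or.inl ⟨A, B, C, Or.inr (Or.inl rfl)⟩)

lemma d_ax3 {H : Set Fm} (A B : Fm) : Deriv Ax' H (imp A (imp B (Fm.and A B))) :=
  .ax (Or.inl ⟨A, B, B, Or.inr (Or.inr (Or.inl rfl))⟩)

lemma d_ax4 {H : Set Fm} (A B : Fm) : Deriv Ax' H (imp (Fm.and A B) A) :=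
  .ax (Or.inl ⟨A, B, B, Or.inr (Or.inr (Or.inr (Or.inl rfl)))⟩)

lemma d_9b {H : Set Fm} (A B : Fm) :
    Deriv Ax' H (imp (imp A B) (imp (neg B) (neg A))) :=
  .ax (Or.inr ⟨A, B, rfl⟩)

lemma d_id {H : Set Fm} (A : Fm) : Deriv Ax' H (imp A A) :=
  ((d_ax2 A (imp A A) A).mp (d_ax1 A A)).mp (d_ax1 A (imp A A))

lemma ded {H : Set Fm} {A B : Fm} (h : Deriv Ax' (insert A H) B) :
    Deriv Ax' H (imp A B) := by
  induction h with
  | ax hf => exact (d_ax1 _ _).mp (.ax hf)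
  | hyp hf =>
      rcases hf with rfl | hf
      · exact d_id _
      · exact (d_ax1 _ _).mp (.hyp hf)
  | mp _ _ ih1 ih2 => exact ((d_ax2 _ _ _).mp ih2).mp ih1

lemma d_comp {H : Set Fm} {X Y Z : Fm} (h1 : Deriv Ax' H (imp X Y))
    (h2 : Deriv Ax' H (imp Y Z)) : Deriv Ax' H (imp X Z) :=
  ((d_ax2 X Y Z).mp h1).mp ((d_ax1 (imp Y Z) X).mp h2)

lemma con_proj {H : Set Fm} (B : Fm) : ∀ n, 1 ≤ n →
    Deriv Ax' H (imp (conN B n) (pow B 1))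
  | 1, _ => d_id _
  | (n+2), _ => by
      have ih := con_proj (H := H) B (n+1) (Nat.le_add_left 1 n)
      exact d_comp (d_ax4 (conN B (n+1)) (pow B (n+2))) ih

end Aux

theorem stmt7 (A B : Fm) (n : Nat) (hn : 1 ≤ n) :
    Deriv (fun f => PosAx f ∨ Ax9b f) ∅
      (imp (conN B n) (imp (imp A B) (imp (imp A (neg B)) (neg A)))) := by
  apply ded; apply ded; apply ded
  set H3 : Set Fm := insert (imp A (neg B)) (insert (imp A B) (insert (conN B n) (∅ : Set Fm))) with hH3
  have h1 : Deriv Ax' H3 (conN B n) := .hyp (by simp [hH3])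
  have hAB : Deriv Ax' H3 (imp A B) := .hyp (by simp [hH3])
  have hAnB : Deriv Ax' H3 (imp A (neg B)) := .hyp (by simp [hH3])
  have hcirc : Deriv Ax' H3 (neg (Fm.and B (neg B))) := (con_proj B n hn).mp h1
  have hcon : Deriv Ax' H3 (imp A (Fm.and B (neg B))) := by
    apply ded
    have hA : Deriv Ax' (insert A H3) A := .hyp (Set.mem_insert _ _)
    have hAB' : Deriv Ax' (insert A H3) (imp A B) := .hyp (by simp [hH3])
    have hAnB' : Deriv Ax' (insert A H3) (imp A (neg B)) := .hyp (by simp [hH3])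
    exact ((d_ax3 B (neg B)).mp (hAB'.mp hA)).mp (hAnB'.mp hA)
  exact ((d_9b A (Fm.and B (neg B))).mp hcon).mp hcirc
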